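/- There exists a constant C > 0 such that for all t ≠ 0, sup_{s∈ℝ} |∫_{-π}^{0} exp(-i t[(2 - 2cos x)² - s x]) dx| ≤ C |t|^{-1/4}. -/

import Mathlib

open scoped Real
open Set MeasureTheory

namespace VdCAux

lemma norm_osc (r : ℝ) : ‖Complex.exp (Complex.I * (r : ℂ))‖ = 1 := by
  rw [mul_comm]; exact Complex.norm_exp_ofReal_mul_I r

lemma cont_of_deriv {f f' : ℝ → ℝ} (h : ∀ x, HasDerivAt f (f' x) x) : Continuous f :=
  continuous_iff_continuousAt.2 fun x => (h x).continuousAt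

lemma osc_cont (φ : ℝ → ℝ) (hφc : Continuous φ) :
    Continuous fun x => Complex.exp (Complex.I * (φ x : ℂ)) :=
  Complex.continuous_exp.comp (continuous_const.mul (Complex.continuous_ofReal.comp hφc))

lemma interval_integral_conj (f : ℝ → ℂ) (a b : ℝ) :
    (∫ x in a..b, (starRingEnd ℂ) (f x)) = (starRingEnd ℂ) (∫ x in a..b, f x) := by
  simp only [intervalIntegral, ← integral_conj, map_sub]

lemma osc_norm_neg (φ : ℝ → ℝ) (a b : ℝ) :
    ‖∫ x in a..b, Complex.exp (Complex.I * ((-φ x : ℝ) : ℂ))‖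
      = ‖∫ x in a..b, Complex.exp (Complex.I * ((φ x : ℝ) : ℂ))‖ := by
  have h : ∀ x : ℝ, Complex.exp (Complex.I * ((-φ x : ℝ) : ℂ))
      = (starRingEnd ℂ) (Complex.exp (Complex.I * ((φ x : ℝ) : ℂ))) := by
    intro x
    rw [← Complex.exp_conj]
    congr 1
    rw [map_mul, Complex.conj_I, Complex.conj_ofReal]
    push_cast
    ring
  simp_rw [h, interval_integral_conj]
  exact RCLike.norm_conj _

lemma osc_trivial (φ : ℝ → ℝ) (a b : ℝ) (hab : a ≤ b) :
    ‖∫ x in a..b, Complex.exp (Complex.I * (φ x : ℂ))‖ ≤ b - a := by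
  have h := intervalIntegral.norm_integral_le_of_norm_le_const
    (a := a) (b := b) (C := 1)
    (f := fun x => Complex.exp (Complex.I * (φ x : ℂ)))
    (fun x _ => by rw [norm_osc])
  rw [abs_of_nonneg (sub_nonneg.2 hab)] at h
  linarith

lemma sign_const {f : ℝ → ℝ} {a b lam : ℝ} (hab : a ≤ b) (hlam : 0 < lam)
    (hf : ContinuousOn f (Icc a b)) (h : ∀ x ∈ Icc a b, lam ≤ |f x|) :
    (∀ x ∈ Icc a b, lam ≤ f x) ∨ (∀ x ∈ Icc a b, f x ≤ -lam) := by
  by_cases hfa : 0 < f a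
  · left
    intro x hx
    by_contra hlt
    push_neg at hlt
    have hx' : f x ≤ -lam := by
      rcases abs_cases (f x) with ⟨h1, _⟩ | ⟨h1, _⟩
      · linarith [h x hx]
      · linarith [h x hx]
    have hsub : Icc a x ⊆ Icc a b := Icc_subset_Icc le_rfl hx.2
    obtain ⟨z, hz, hz0⟩ := intermediate_value_Icc' hx.1 (hf.mono hsub)
      (⟨by linarith, hfa.le⟩ : (0:ℝ) ∈ Icc (f x) (f a))
    have hza := h z (hsub hz)
    rw [hz0] at hza
    simp at hza
    linarith
  · right
    push_neg at hfa
    have hfa' : f a ≤ -lam := by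
      rcases abs_cases (f a) with ⟨h1, _⟩ | ⟨h1, _⟩
      · linarith [h a ⟨le_rfl, hab⟩]
      · linarith [h a ⟨le_rfl, hab⟩]
    intro x hx
    by_contra hlt
    push_neg at hlt
    have hx' : lam ≤ f x := by
      rcases abs_cases (f x) with ⟨h1, _⟩ | ⟨h1, _⟩
      · linarith [h x hx]
      · linarith [h x hx]
    have hsub : Icc a x ⊆ Icc a b := Icc_subset_Icc le_rfl hx.2
    obtain ⟨z, hz, hz0⟩ := intermediate_value_Icc hx.1 (hf.mono hsub)
      (⟨by linarith, by linarith⟩ : (0:ℝ) ∈ Icc (f a) (f x))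
    have hza := h z (hsub hz)
    rw [hz0] at hza
    simp at hza
    linarith

/-- Van der Corput, first-derivative (non-stationary phase) estimate. -/
lemma vdc1 (φ d1 d2 : ℝ → ℝ) (a b lam : ℝ) (hab : a ≤ b) (hlam : 0 < lam)
    (hφ : ∀ x, HasDerivAt φ (d1 x) x)
    (hd1 : ∀ x, HasDerivAt d1 (d2 x) x)
    (hd2c : Continuous d2)
    (h1 : ∀ x ∈ Icc a b, lam ≤ |d1 x|)
    (h2 : (∀ x ∈ Icc a b, 0 ≤ d2 x) ∨ (∀ x ∈ Icc a b, d2 x ≤ 0)) :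
    ‖∫ x in a..b, Complex.exp (Complex.I * (φ x : ℂ))‖ ≤ 3 / lam := by
  have hd1c : Continuous d1 := cont_of_deriv hd1
  have hφc : Continuous φ := cont_of_deriv hφ
  have huIcc : uIcc a b = Icc a b := uIcc_of_le hab
  have hne : ∀ x ∈ Icc a b, d1 x ≠ 0 := by
    intro x hx h0
    have := h1 x hx
    rw [h0] at this
    simp at this
    linarith
  have hneC : ∀ x ∈ Icc a b, (Complex.I * (d1 x : ℂ)) ≠ 0 := by
    intro x hx
    simp [Complex.I_ne_zero, Complex.ofReal_ne_zero, hne x hx]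
  set u : ℝ → ℂ := fun x => 1 / (Complex.I * (d1 x : ℂ)) with hu
  set u' : ℝ → ℂ := fun x => -(Complex.I * (d2 x : ℂ)) / (Complex.I * (d1 x : ℂ)) ^ 2 with hu'
  set v : ℝ → ℂ := fun x => Complex.exp (Complex.I * (φ x : ℂ)) with hv
  set v' : ℝ → ℂ := fun x => (Complex.I * (d1 x : ℂ)) * Complex.exp (Complex.I * (φ x : ℂ)) with hv'
  have hvd : ∀ x, HasDerivAt v (v' x) x := by
    intro x
    have h0 : HasDerivAt (fun y : ℝ => Complex.I * ((φ y : ℝ) : ℂ)) (Complex.I * (d1 x : ℂ)) x :=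
      ((hφ x).ofReal_comp).const_mul Complex.I
    simpa [hv, hv', mul_comm] using h0.cexp
  have hud : ∀ x ∈ uIcc a b, HasDerivAt u (u' x) x := by
    intro x hx
    rw [huIcc] at hx
    have hI : HasDerivAt (fun y : ℝ => Complex.I * ((d1 y : ℝ) : ℂ)) (Complex.I * (d2 x : ℂ)) x :=
      ((hd1 x).ofReal_comp).const_mul Complex.I
    have := (hasDerivAt_const x (1:ℂ)).div hI (hneC x hx)
    simp only [hu, hu']
    exact this.congr_deriv (by ring)
  have hcd1C : Continuous fun x : ℝ => Complex.I * ((d1 x : ℝ) : ℂ) :=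
    continuous_const.mul (Complex.continuous_ofReal.comp hd1c)
  have hvC : Continuous v := osc_cont φ hφc
  have hv'i : IntervalIntegrable v' volume a b := (hcd1C.mul hvC).intervalIntegrable a b
  have hu'i : IntervalIntegrable u' volume a b := by
    apply ContinuousOn.intervalIntegrable
    apply ContinuousOn.div
    · exact (continuous_const.mul (Complex.continuous_ofReal.comp hd2c)).neg.continuousOn
    · exact (hcd1C.pow 2).continuousOn
    · intro x hx
      rw [huIcc] at hx
      exact pow_ne_zero 2 (hneC x hx)
  have hIBP := intervalIntegral.integral_mul_deriv_eq_deriv_mul hud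
    (fun x _ => hvd x) hu'i hv'i
  have hmain : (∫ x in a..b, v x) = u b * v b - u a * v a - ∫ x in a..b, u' x * v x := by
    rw [← hIBP]
    apply intervalIntegral.integral_congr
    intro x hx
    rw [huIcc] at hx
    show v x = u x * v' x
    rw [hu, hv']
    simp only
    rw [one_div, ← mul_assoc, inv_mul_cancel₀ (hneC x hx), one_mul]
  have hnormId : ∀ x ∈ Icc a b, ‖u x‖ ≤ 1 / lam := by
    intro x hx
    rw [hu]
    simp only [norm_div, norm_one, norm_mul, Complex.norm_I, Complex.norm_real,
      Real.norm_eq_abs, one_mul]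
    apply div_le_div_of_nonneg_left (by norm_num) hlam (h1 x hx)
  -- FTC for the inner integral
  have hwd : ∀ x ∈ uIcc a b, HasDerivAt (fun y => -(d1 y)⁻¹) (d2 x / (d1 x) ^ 2) x := by
    intro x hx
    rw [huIcc] at hx
    have := ((hd1 x).inv (hne x hx)).neg
    exact this.congr_deriv (by ring)
  have hdi : IntervalIntegrable (fun x => d2 x / (d1 x) ^ 2) volume a b := by
    apply ContinuousOn.intervalIntegrable
    apply ContinuousOn.div hd2c.continuousOn ((hd1c.pow 2).continuousOn)
    intro x hx
    rw [huIcc] at hx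
    exact pow_ne_zero 2 (hne x hx)
  have hFTC := intervalIntegral.integral_eq_sub_of_hasDerivAt hwd hdi
  -- ∫ d2/d1^2 = (d1 a)⁻¹ - (d1 b)⁻¹
  have hFTC' : (∫ x in a..b, d2 x / (d1 x) ^ 2) = (d1 a)⁻¹ - (d1 b)⁻¹ := by
    rw [hFTC]; ring
  have hsg := sign_const hab hlam hd1c.continuousOn h1
  have hinv_bound : |(d1 a)⁻¹ - (d1 b)⁻¹| ≤ 1 / lam := by
    rcases hsg with hp | hn
    · have ha' := hp a ⟨le_rfl, hab⟩
      have hb' := hp b ⟨hab, le_rfl⟩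
      have h1a : (d1 a)⁻¹ ≤ lam⁻¹ := by
        apply inv_anti₀ hlam ha'
      have h1b : (d1 b)⁻¹ ≤ lam⁻¹ := by
        apply inv_anti₀ hlam hb'
      have h0a : 0 < (d1 a)⁻¹ := inv_pos.2 (by linarith)
      have h0b : 0 < (d1 b)⁻¹ := inv_pos.2 (by linarith)
      rw [abs_le]
      refine ⟨by rw [← inv_eq_one_div]; linarith, by rw [← inv_eq_one_div]; linarith⟩
    · have ha' := hn a ⟨le_rfl, hab⟩
      have hb' := hn b ⟨hab, le_rfl⟩
      have h1a : -(d1 a)⁻¹ ≤ lam⁻¹ := by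
        rw [← inv_neg]
        apply inv_anti₀ hlam (by linarith)
      have h1b : -(d1 b)⁻¹ ≤ lam⁻¹ := by
        rw [← inv_neg]
        apply inv_anti₀ hlam (by linarith)
      have h0a : (d1 a)⁻¹ < 0 := inv_neg''.2 (by linarith)
      have h0b : (d1 b)⁻¹ < 0 := inv_neg''.2 (by linarith)
      rw [abs_le]
      refine ⟨by rw [← inv_eq_one_div]; linarith, by rw [← inv_eq_one_div]; linarith⟩
  have hI2 : ‖∫ x in a..b, u' x * v x‖ ≤ 1 / lam := by
    have hstep1 : ‖∫ x in a..b, u' x * v x‖ ≤ ∫ x in a..b, ‖u' x * v x‖ :=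
      intervalIntegral.norm_integral_le_integral_norm hab
    have hstep2 : (∫ x in a..b, ‖u' x * v x‖) = ∫ x in a..b, |d2 x| / (d1 x) ^ 2 := by
      apply intervalIntegral.integral_congr
      intro x hx
      rw [huIcc] at hx
      show ‖u' x * v x‖ = |d2 x| / (d1 x) ^ 2
      rw [hu', hv]
      simp only [norm_mul, norm_div, norm_neg, norm_pow]
      rw [norm_osc, mul_one]
      simp [norm_mul, Complex.norm_I, Complex.norm_real, Real.norm_eq_abs, sq_abs]
    have hstep3 : (∫ x in a..b, |d2 x| / (d1 x) ^ 2) ≤ 1 / lam := by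
      rcases h2 with hp | hn
      · have : (∫ x in a..b, |d2 x| / (d1 x) ^ 2) = ∫ x in a..b, d2 x / (d1 x) ^ 2 := by
          apply intervalIntegral.integral_congr
          intro x hx
          rw [huIcc] at hx
          show |d2 x| / (d1 x) ^ 2 = d2 x / (d1 x) ^ 2
          rw [abs_of_nonneg (hp x hx)]
        rw [this, hFTC']
        exact le_trans (le_abs_self _) hinv_bound
      · have : (∫ x in a..b, |d2 x| / (d1 x) ^ 2) = ∫ x in a..b, -(d2 x / (d1 x) ^ 2) := by
          apply intervalIntegral.integral_congr
          intro x hx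
          rw [huIcc] at hx
          show |d2 x| / (d1 x) ^ 2 = -(d2 x / (d1 x) ^ 2)
          rw [abs_of_nonpos (hn x hx)]
          ring
        rw [this, intervalIntegral.integral_neg, hFTC']
        calc -((d1 a)⁻¹ - (d1 b)⁻¹) ≤ |(d1 a)⁻¹ - (d1 b)⁻¹| := neg_le_abs _
        _ ≤ 1 / lam := hinv_bound
    calc ‖∫ x in a..b, u' x * v x‖ ≤ ∫ x in a..b, ‖u' x * v x‖ := hstep1
    _ = ∫ x in a..b, |d2 x| / (d1 x) ^ 2 := hstep2
    _ ≤ 1 / lam := hstep3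
  have hVb : ‖v b‖ = 1 := norm_osc (φ b)
  have hVa : ‖v a‖ = 1 := norm_osc (φ a)
  calc ‖∫ x in a..b, Complex.exp (Complex.I * (φ x : ℂ))‖
      = ‖u b * v b - u a * v a - ∫ x in a..b, u' x * v x‖ := by rw [← hmain]
  _ ≤ ‖u b * v b - u a * v a‖ + ‖∫ x in a..b, u' x * v x‖ := norm_sub_le _ _
  _ ≤ ‖u b * v b‖ + ‖u a * v a‖ + ‖∫ x in a..b, u' x * v x‖ := by
      have := norm_sub_le (u b * v b) (u a * v a); linarith
  _ ≤ 1 / lam + 1 / lam + 1 / lam := by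
      have hb2 : ‖u b * v b‖ ≤ 1 / lam := by
        rw [norm_mul, hVb, mul_one]; exact hnormId b ⟨hab, le_rfl⟩
      have ha2 : ‖u a * v a‖ ≤ 1 / lam := by
        rw [norm_mul, hVa, mul_one]; exact hnormId a ⟨le_rfl, hab⟩
      linarith
  _ = 3 / lam := by ring

/-- Splitting step for the Van der Corput induction. -/
lemma vdc_step (φ d dd : ℝ → ℝ) (a b lam δ B : ℝ)
    (hab : a ≤ b) (hlam : 0 < lam) (hδ : 0 < δ) (hB : 0 ≤ B)
    (hφc : Continuous φ)
    (hd : ∀ x, HasDerivAt d (dd x) x)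
    (hdd : ∀ x ∈ Icc a b, lam ≤ dd x)
    (hrec : ∀ c e, a ≤ c → c ≤ e → e ≤ b → (∀ x ∈ Icc c e, δ ≤ |d x|) →
        ‖∫ x in c..e, Complex.exp (Complex.I * (φ x : ℂ))‖ ≤ B) :
    ‖∫ x in a..b, Complex.exp (Complex.I * (φ x : ℂ))‖ ≤ 2 * B + 2 * (δ / lam) := by
  have hdc : Continuous d := cont_of_deriv hd
  have hgrow : ∀ x ∈ Icc a b, ∀ y ∈ Icc a b, x ≤ y → lam * (y - x) ≤ d y - d x :=
    Convex.mul_sub_le_image_sub_of_le_deriv (convex_Icc a b) hdc.continuousOn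
      (fun x _ => (hd x).differentiableAt.differentiableWithinAt)
      (fun x hx => by rw [(hd x).deriv]; exact hdd x (interior_subset hx))
  have hIc : ∀ c e : ℝ, IntervalIntegrable
      (fun x => Complex.exp (Complex.I * (φ x : ℂ))) volume c e :=
    fun c e => (osc_cont φ hφc).intervalIntegrable c e
  have hratio : 0 < δ / lam := div_pos hδ hlam
  have htriv : ∀ c e, a ≤ c → c ≤ e → e ≤ b → d e - d c ≤ 2 * δ →
      ‖∫ x in c..e, Complex.exp (Complex.I * (φ x : ℂ))‖ ≤ 2 * (δ / lam) := by
    intro c e hac hce heb hde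
    have h1 := hgrow c ⟨hac, hce.trans heb⟩ e ⟨hac.trans hce, heb⟩ hce
    have hlen : e - c ≤ 2 * (δ / lam) := by
      rw [mul_div_assoc'] at *
      rw [le_div_iff₀ hlam]
      nlinarith
    exact (osc_trivial φ c e hce).trans hlen
  have hrecN : ∀ c e, a ≤ c → c ≤ e → e ≤ b → d e ≤ -δ →
      ‖∫ x in c..e, Complex.exp (Complex.I * (φ x : ℂ))‖ ≤ B := by
    intro c e hac hce heb hde
    refine hrec c e hac hce heb fun x hx => ?_
    have hg := hgrow x ⟨hac.trans hx.1, hx.2.trans heb⟩ e ⟨hac.trans hce, heb⟩ hx.2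
    have h0 : 0 ≤ lam * (e - x) := mul_nonneg hlam.le (sub_nonneg.2 hx.2)
    exact le_abs.2 (Or.inr (by linarith))
  have hrecP : ∀ c e, a ≤ c → c ≤ e → e ≤ b → δ ≤ d c →
      ‖∫ x in c..e, Complex.exp (Complex.I * (φ x : ℂ))‖ ≤ B := by
    intro c e hac hce heb hdcge
    refine hrec c e hac hce heb fun x hx => ?_
    have hg := hgrow c ⟨hac, hce.trans heb⟩ x ⟨hac.trans hx.1, hx.2.trans heb⟩ hx.1
    have h0 : 0 ≤ lam * (x - c) := mul_nonneg hlam.le (sub_nonneg.2 hx.1)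
    exact le_abs.2 (Or.inl (by linarith))
  by_cases hb1 : d b ≤ -δ
  · exact (hrecN a b le_rfl hab le_rfl hb1).trans (by linarith)
  by_cases ha1 : δ ≤ d a
  · exact (hrecP a b le_rfl hab le_rfl ha1).trans (by linarith)
  push_neg at hb1 ha1
  by_cases ha2 : -δ ≤ d a
  · by_cases hb2 : d b ≤ δ
    · exact (htriv a b le_rfl hab le_rfl (by linarith)).trans (by linarith)
    · push_neg at hb2
      obtain ⟨c, hcmem, hdc2⟩ := intermediate_value_Icc hab hdc.continuousOn
        (⟨ha1.le, hb2.le⟩ : δ ∈ Icc (d a) (d b))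
      have hA := htriv a c le_rfl hcmem.1 hcmem.2 (by rw [hdc2]; linarith)
      have hB2 := hrecP c b hcmem.1 hcmem.2 le_rfl hdc2.ge
      have heq : (∫ x in a..b, Complex.exp (Complex.I * (φ x : ℂ)))
          = (∫ x in a..c, Complex.exp (Complex.I * (φ x : ℂ)))
            + ∫ x in c..b, Complex.exp (Complex.I * (φ x : ℂ)) :=
        (intervalIntegral.integral_add_adjacent_intervals (hIc a c) (hIc c b)).symm
      calc ‖∫ x in a..b, Complex.exp (Complex.I * (φ x : ℂ))‖
          ≤ ‖∫ x in a..c, Complex.exp (Complex.I * (φ x : ℂ))‖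
            + ‖∫ x in c..b, Complex.exp (Complex.I * (φ x : ℂ))‖ := by
            rw [heq]; exact norm_add_le _ _
      _ ≤ 2 * (δ / lam) + B := add_le_add hA hB2
      _ ≤ 2 * B + 2 * (δ / lam) := by linarith
  · push_neg at ha2
    by_cases hb2 : d b ≤ δ
    · obtain ⟨c, hcmem, hdc2⟩ := intermediate_value_Icc hab hdc.continuousOn
        (⟨ha2.le, hb1.le⟩ : -δ ∈ Icc (d a) (d b))
      have hA := hrecN a c le_rfl hcmem.1 hcmem.2 hdc2.le
      have hB2 := htriv c b hcmem.1 hcmem.2 le_rfl (by rw [hdc2]; linarith)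
      have heq : (∫ x in a..b, Complex.exp (Complex.I * (φ x : ℂ)))
          = (∫ x in a..c, Complex.exp (Complex.I * (φ x : ℂ)))
            + ∫ x in c..b, Complex.exp (Complex.I * (φ x : ℂ)) :=
        (intervalIntegral.integral_add_adjacent_intervals (hIc a c) (hIc c b)).symm
      calc ‖∫ x in a..b, Complex.exp (Complex.I * (φ x : ℂ))‖
          ≤ ‖∫ x in a..c, Complex.exp (Complex.I * (φ x : ℂ))‖
            + ‖∫ x in c..b, Complex.exp (Complex.I * (φ x : ℂ))‖ := by
            rw [heq]; exact norm_add_le _ _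
      _ ≤ B + 2 * (δ / lam) := add_le_add hA hB2
      _ ≤ 2 * B + 2 * (δ / lam) := by linarith
    · push_neg at hb2
      obtain ⟨c₁, hc1mem, hdc1⟩ := intermediate_value_Icc hab hdc.continuousOn
        (⟨ha2.le, hb1.le⟩ : -δ ∈ Icc (d a) (d b))
      obtain ⟨c₂, hc2mem, hdc2⟩ := intermediate_value_Icc hab hdc.continuousOn
        (⟨by linarith, hb2.le⟩ : δ ∈ Icc (d a) (d b))
      have hc12 : c₁ ≤ c₂ := by
        by_contra hlt
        push_neg at hlt
        have hg := hgrow c₂ hc2mem c₁ hc1mem hlt.le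
        nlinarith [mul_pos hlam (sub_pos.2 hlt)]
      have hA := hrecN a c₁ le_rfl hc1mem.1 hc1mem.2 hdc1.le
      have hM := htriv c₁ c₂ hc1mem.1 hc12 hc2mem.2 (by rw [hdc1, hdc2]; linarith)
      have hC := hrecP c₂ b hc2mem.1 hc2mem.2 le_rfl hdc2.ge
      have heq : (∫ x in a..b, Complex.exp (Complex.I * (φ x : ℂ)))
          = ((∫ x in a..c₁, Complex.exp (Complex.I * (φ x : ℂ)))
            + ∫ x in c₁..c₂, Complex.exp (Complex.I * (φ x : ℂ)))
            + ∫ x in c₂..b, Complex.exp (Complex.I * (φ x : ℂ)) := by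
        rw [intervalIntegral.integral_add_adjacent_intervals (hIc a c₁) (hIc c₁ c₂),
          intervalIntegral.integral_add_adjacent_intervals (hIc a c₂) (hIc c₂ b)]
      calc ‖∫ x in a..b, Complex.exp (Complex.I * (φ x : ℂ))‖
          ≤ (‖∫ x in a..c₁, Complex.exp (Complex.I * (φ x : ℂ))‖
            + ‖∫ x in c₁..c₂, Complex.exp (Complex.I * (φ x : ℂ))‖)
            + ‖∫ x in c₂..b, Complex.exp (Complex.I * (φ x : ℂ))‖ := by
            rw [heq]
            exact (norm_add_le _ _).trans (add_le_add_left (norm_add_le _ _) _)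
      _ ≤ (B + 2 * (δ / lam)) + B := add_le_add (add_le_add hA hM) hC
      _ = 2 * B + 2 * (δ / lam) := by ring

lemma rpow_split (lam : ℝ) (hlam : 0 < lam) (p : ℝ) :
    lam ^ (p - 1) * lam = lam ^ p := by
  nth_rewrite 2 [← Real.rpow_one lam]
  rw [← Real.rpow_add hlam]
  ring_nf

lemma vdc2_pos (φ d1 d2 : ℝ → ℝ) (a b lam : ℝ) (hab : a ≤ b) (hlam : 0 < lam)
    (hφ : ∀ x, HasDerivAt φ (d1 x) x) (hd1 : ∀ x, HasDerivAt d1 (d2 x) x)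
    (hd2c : Continuous d2)
    (h2 : ∀ x ∈ Icc a b, lam ≤ d2 x) :
    ‖∫ x in a..b, Complex.exp (Complex.I * (φ x : ℂ))‖ ≤ 8 * lam ^ (-(1/2 : ℝ)) := by
  have hφc : Continuous φ := cont_of_deriv hφ
  set δ : ℝ := lam ^ ((1/2 : ℝ)) with hδdef
  have hδ : 0 < δ := Real.rpow_pos_of_pos hlam _
  have key := vdc_step φ d1 d2 a b lam δ (3 / δ) hab hlam hδ (by positivity) hφc hd1 h2
    (fun c e hac hce heb habs =>
      vdc1 φ d1 d2 c e δ hce hδ hφ hd1 hd2c habs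
        (Or.inl fun x hx => hlam.le.trans (h2 x ⟨hac.trans hx.1, hx.2.trans heb⟩)))
  have e1 : (3 : ℝ) / δ = 3 * lam ^ (-(1/2 : ℝ)) := by
    rw [hδdef, Real.rpow_neg hlam.le, div_eq_mul_inv]
  have e2 : δ / lam = lam ^ (-(1/2 : ℝ)) := by
    rw [div_eq_iff hlam.ne', hδdef]
    rw [show (-(1/2 : ℝ)) = (1/2 : ℝ) - 1 by norm_num, rpow_split lam hlam]
  calc ‖∫ x in a..b, Complex.exp (Complex.I * (φ x : ℂ))‖
      ≤ 2 * (3 / δ) + 2 * (δ / lam) := key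
  _ = 8 * lam ^ (-(1/2 : ℝ)) := by rw [e1, e2]; ring

lemma vdc2 (φ d1 d2 : ℝ → ℝ) (a b lam : ℝ) (hab : a ≤ b) (hlam : 0 < lam)
    (hφ : ∀ x, HasDerivAt φ (d1 x) x) (hd1 : ∀ x, HasDerivAt d1 (d2 x) x)
    (hd2c : Continuous d2)
    (h2 : ∀ x ∈ Icc a b, lam ≤ |d2 x|) :
    ‖∫ x in a..b, Complex.exp (Complex.I * (φ x : ℂ))‖ ≤ 8 * lam ^ (-(1/2 : ℝ)) := by
  rcases sign_const hab hlam hd2c.continuousOn h2 with hp | hn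
  · exact vdc2_pos φ d1 d2 a b lam hab hlam hφ hd1 hd2c hp
  · have h := vdc2_pos (fun x => -φ x) (fun x => -d1 x) (fun x => -d2 x) a b lam hab hlam
      (fun x => (hφ x).neg) (fun x => (hd1 x).neg) hd2c.neg
      (fun x hx => by have := hn x hx; linarith)
    rw [← osc_norm_neg φ a b]
    exact h

lemma vdc3_pos (φ d1 d2 d3 : ℝ → ℝ) (a b lam : ℝ) (hab : a ≤ b) (hlam : 0 < lam)
    (hφ : ∀ x, HasDerivAt φ (d1 x) x) (hd1 : ∀ x, HasDerivAt d1 (d2 x) x)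
    (hd2 : ∀ x, HasDerivAt d2 (d3 x) x)
    (hd2c : Continuous d2)
    (h3 : ∀ x ∈ Icc a b, lam ≤ d3 x) :
    ‖∫ x in a..b, Complex.exp (Complex.I * (φ x : ℂ))‖ ≤ 18 * lam ^ (-(1/3 : ℝ)) := by
  have hφc : Continuous φ := cont_of_deriv hφ
  set δ : ℝ := lam ^ ((2/3 : ℝ)) with hδdef
  have hδ : 0 < δ := Real.rpow_pos_of_pos hlam _
  have key := vdc_step φ d2 d3 a b lam δ (8 * δ ^ (-(1/2 : ℝ))) hab hlam hδ (by positivity)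
    hφc hd2 h3
    (fun c e hac hce heb habs =>
      vdc2 φ d1 d2 c e δ hce hδ hφ hd1 hd2c habs)
  have e1 : δ ^ (-(1/2 : ℝ)) = lam ^ (-(1/3 : ℝ)) := by
    rw [hδdef, ← Real.rpow_mul hlam.le]
    norm_num
  have e2 : δ / lam = lam ^ (-(1/3 : ℝ)) := by
    rw [div_eq_iff hlam.ne', hδdef]
    rw [show (-(1/3 : ℝ)) = (2/3 : ℝ) - 1 by norm_num, rpow_split lam hlam]
  calc ‖∫ x in a..b, Complex.exp (Complex.I * (φ x : ℂ))‖
      ≤ 2 * (8 * δ ^ (-(1/2 : ℝ))) + 2 * (δ / lam) := key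
  _ = 18 * lam ^ (-(1/3 : ℝ)) := by rw [e1, e2]; ring

lemma vdc3 (φ d1 d2 d3 : ℝ → ℝ) (a b lam : ℝ) (hab : a ≤ b) (hlam : 0 < lam)
    (hφ : ∀ x, HasDerivAt φ (d1 x) x) (hd1 : ∀ x, HasDerivAt d1 (d2 x) x)
    (hd2 : ∀ x, HasDerivAt d2 (d3 x) x)
    (hd2c : Continuous d2) (hd3c : Continuous d3)
    (h3 : ∀ x ∈ Icc a b, lam ≤ |d3 x|) :
    ‖∫ x in a..b, Complex.exp (Complex.I * (φ x : ℂ))‖ ≤ 18 * lam ^ (-(1/3 : ℝ)) := by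
  rcases sign_const hab hlam hd3c.continuousOn h3 with hp | hn
  · exact vdc3_pos φ d1 d2 d3 a b lam hab hlam hφ hd1 hd2 hd2c hp
  · have h := vdc3_pos (fun x => -φ x) (fun x => -d1 x) (fun x => -d2 x) (fun x => -d3 x)
      a b lam hab hlam
      (fun x => (hφ x).neg) (fun x => (hd1 x).neg) (fun x => (hd2 x).neg) hd2c.neg
      (fun x hx => by have := hn x hx; linarith)
    rw [← osc_norm_neg φ a b]
    exact h

lemma vdc4_pos (φ d1 d2 d3 d4 : ℝ → ℝ) (a b lam : ℝ) (hab : a ≤ b) (hlam : 0 < lam)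
    (hφ : ∀ x, HasDerivAt φ (d1 x) x) (hd1 : ∀ x, HasDerivAt d1 (d2 x) x)
    (hd2 : ∀ x, HasDerivAt d2 (d3 x) x) (hd3 : ∀ x, HasDerivAt d3 (d4 x) x)
    (hd2c : Continuous d2) (hd3c : Continuous d3)
    (h4 : ∀ x ∈ Icc a b, lam ≤ d4 x) :
    ‖∫ x in a..b, Complex.exp (Complex.I * (φ x : ℂ))‖ ≤ 38 * lam ^ (-(1/4 : ℝ)) := by
  have hφc : Continuous φ := cont_of_deriv hφ
  set δ : ℝ := lam ^ ((3/4 : ℝ)) with hδdef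
  have hδ : 0 < δ := Real.rpow_pos_of_pos hlam _
  have key := vdc_step φ d3 d4 a b lam δ (18 * δ ^ (-(1/3 : ℝ))) hab hlam hδ (by positivity)
    hφc hd3 h4
    (fun c e hac hce heb habs =>
      vdc3 φ d1 d2 d3 c e δ hce hδ hφ hd1 hd2 hd2c hd3c habs)
  have e1 : δ ^ (-(1/3 : ℝ)) = lam ^ (-(1/4 : ℝ)) := by
    rw [hδdef, ← Real.rpow_mul hlam.le]
    norm_num
  have e2 : δ / lam = lam ^ (-(1/4 : ℝ)) := by
    rw [div_eq_iff hlam.ne', hδdef]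
    rw [show (-(1/4 : ℝ)) = (3/4 : ℝ) - 1 by norm_num, rpow_split lam hlam]
  calc ‖∫ x in a..b, Complex.exp (Complex.I * (φ x : ℂ))‖
      ≤ 2 * (18 * δ ^ (-(1/3 : ℝ))) + 2 * (δ / lam) := key
  _ = 38 * lam ^ (-(1/4 : ℝ)) := by rw [e1, e2]; ring

lemma vdc4 (φ d1 d2 d3 d4 : ℝ → ℝ) (a b lam : ℝ) (hab : a ≤ b) (hlam : 0 < lam)
    (hφ : ∀ x, HasDerivAt φ (d1 x) x) (hd1 : ∀ x, HasDerivAt d1 (d2 x) x)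
    (hd2 : ∀ x, HasDerivAt d2 (d3 x) x) (hd3 : ∀ x, HasDerivAt d3 (d4 x) x)
    (hd2c : Continuous d2) (hd3c : Continuous d3) (hd4c : Continuous d4)
    (h4 : ∀ x ∈ Icc a b, lam ≤ |d4 x|) :
    ‖∫ x in a..b, Complex.exp (Complex.I * (φ x : ℂ))‖ ≤ 38 * lam ^ (-(1/4 : ℝ)) := by
  rcases sign_const hab hlam hd4c.continuousOn h4 with hp | hn
  · exact vdc4_pos φ d1 d2 d3 d4 a b lam hab hlam hφ hd1 hd2 hd3 hd2c hd3c hp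
  · have h := vdc4_pos (fun x => -φ x) (fun x => -d1 x) (fun x => -d2 x) (fun x => -d3 x)
      (fun x => -d4 x) a b lam hab hlam
      (fun x => (hφ x).neg) (fun x => (hd1 x).neg) (fun x => (hd2 x).neg)
      (fun x => (hd3 x).neg) hd2c.neg hd3c.neg
      (fun x hx => by have := hn x hx; linarith)
    rw [← osc_norm_neg φ a b]
    exact h

/-! ### The concrete phase and its derivatives -/

lemma sqrt2_ge : (1.4 : ℝ) ≤ Real.sqrt 2 := by
  calc (1.4 : ℝ) = Real.sqrt (1.4 ^ 2) := (Real.sqrt_sq (by norm_num)).symm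
  _ ≤ Real.sqrt 2 := Real.sqrt_le_sqrt (by norm_num)

lemma sqrt3_ge : (1.72 : ℝ) ≤ Real.sqrt 3 := by
  calc (1.72 : ℝ) = Real.sqrt (1.72 ^ 2) := (Real.sqrt_sq (by norm_num)).symm
  _ ≤ Real.sqrt 3 := Real.sqrt_le_sqrt (by norm_num)

lemma sqrt3_le : Real.sqrt 3 ≤ 1.74 := by
  calc Real.sqrt 3 ≤ Real.sqrt (1.74 ^ 2) := Real.sqrt_le_sqrt (by norm_num)
  _ = 1.74 := Real.sqrt_sq (by norm_num)

lemma bnd1 {x : ℝ} (h1 : -π ≤ x) (h2 : x ≤ -(3*π/4)) :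
    8 + 8*Real.cos x - 16*Real.cos x ^ 2 ≤ -1 := by
  have hπ := Real.pi_pos
  set u : ℝ := π + x with hu
  have hu0 : 0 ≤ u := by simp [hu]; linarith
  have hu1 : u ≤ π/4 := by simp [hu]; linarith
  have hcu : Real.cos (π/4) ≤ Real.cos u :=
    Real.cos_le_cos_of_nonneg_of_le_pi hu0 (by linarith) hu1
  have hxc : Real.cos x = -Real.cos u := by
    have : x = -(π - u) := by simp [hu]
    rw [this, Real.cos_neg, Real.cos_pi_sub]
  have h4 : Real.cos (π/4) = Real.sqrt 2 / 2 := Real.cos_pi_div_four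
  have hs2 := sqrt2_ge
  have hc : Real.cos x ≤ -(7/10 : ℝ) := by
    rw [hxc]
    rw [h4] at hcu
    linarith
  nlinarith [sq_nonneg (Real.cos x + 7/10)]

lemma bnd2 {x : ℝ} (h1 : -(3*π/4) ≤ x) (h2 : x ≤ -(π/2)) :
    1 ≤ 8*Real.sin x*(4*Real.cos x - 1) := by
  have hπ := Real.pi_pos
  set w : ℝ := -(π/2 + x) with hw
  have hw0 : 0 ≤ w := by simp [hw]; linarith
  have hw1 : w ≤ π/4 := by simp [hw]; linarith
  have hcw : Real.cos (π/4) ≤ Real.cos w :=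
    Real.cos_le_cos_of_nonneg_of_le_pi hw0 (by linarith) hw1
  have hxs : Real.sin x = -Real.cos w := by
    rw [hw, Real.cos_neg]
    rw [show π/2 + x = π/2 - (-x) by ring, Real.cos_pi_div_two_sub, Real.sin_neg]
    ring
  have hs2 := sqrt2_ge
  have h4 : Real.cos (π/4) = Real.sqrt 2 / 2 := Real.cos_pi_div_four
  have hsle : Real.sin x ≤ -(7/10 : ℝ) := by
    rw [hxs]; rw [h4] at hcw; linarith
  have hcle : Real.cos x ≤ 0 := by
    rw [← Real.cos_neg]
    exact Real.cos_nonpos_of_pi_div_two_le_of_le (by linarith) (by linarith)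
  nlinarith [mul_nonneg (show (0:ℝ) ≤ -Real.sin x by linarith)
    (show (0:ℝ) ≤ -Real.cos x by linarith)]

lemma bnd3 {x : ℝ} (h1 : -(π/2) ≤ x) (h2 : x ≤ -(π/6)) :
    1 ≤ 8 + 8*Real.cos x - 16*Real.cos x ^ 2 := by
  have hπ := Real.pi_pos
  have hc0 : 0 ≤ Real.cos x :=
    Real.cos_nonneg_of_mem_Icc ⟨by linarith, by linarith⟩
  have hcu : Real.cos (-x) ≤ Real.cos (π/6) :=
    Real.cos_le_cos_of_nonneg_of_le_pi (by linarith) (by linarith) (by linarith)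
  rw [Real.cos_neg, Real.cos_pi_div_six] at hcu
  have hs3 := sqrt3_le
  have hc1 : Real.cos x ≤ (87/100 : ℝ) := by linarith
  nlinarith [mul_nonneg hc0 (show (0:ℝ) ≤ 87/100 - Real.cos x by linarith)]

lemma bnd4 {x : ℝ} (h1 : -(π/6) ≤ x) (h2 : x ≤ 0) :
    1 ≤ 64*Real.cos x ^ 2 - 8*Real.cos x - 32 := by
  have hπ := Real.pi_pos
  have hcu : Real.cos (π/6) ≤ Real.cos (-x) :=
    Real.cos_le_cos_of_nonneg_of_le_pi (by linarith) (by linarith) (by linarith)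
  rw [Real.cos_neg, Real.cos_pi_div_six] at hcu
  have hs3 := sqrt3_ge
  have hc1 : (86/100 : ℝ) ≤ Real.cos x := by linarith
  nlinarith [mul_nonneg (show (0:ℝ) ≤ Real.cos x - 86/100 by linarith)
    (show (0:ℝ) ≤ Real.cos x by linarith)]

lemma hder1 (t s : ℝ) (x : ℝ) :
    HasDerivAt (fun x => -t * ((2 - 2*Real.cos x) ^ 2 - s*x))
      (-t * (8*Real.sin x*(1 - Real.cos x) - s)) x := by
  have h0 : HasDerivAt (fun y : ℝ => 2 - 2*Real.cos y) (2*Real.sin x) x := by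
    simpa using (HasDerivAt.const_sub (2:ℝ) ((Real.hasDerivAt_cos x).const_mul (2:ℝ)))
  have h1 : HasDerivAt (fun y : ℝ => (2 - 2*Real.cos y) ^ 2)
      (2*(2 - 2*Real.cos x)*(2*Real.sin x)) x := by
    have := h0.pow 2
    exact this.congr_deriv (by push_cast; ring)
  have h2 : HasDerivAt (fun y : ℝ => (2 - 2*Real.cos y) ^ 2 - s*y)
      (2*(2 - 2*Real.cos x)*(2*Real.sin x) - s) x :=
    h1.sub (by simpa using (hasDerivAt_id x).const_mul s)
  have h3 := h2.const_mul (-t)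
  exact h3.congr_deriv (by ring)

lemma hder2 (t s : ℝ) (x : ℝ) :
    HasDerivAt (fun x => -t * (8*Real.sin x*(1 - Real.cos x) - s))
      (-t * (8 + 8*Real.cos x - 16*Real.cos x ^ 2)) x := by
  have ha : HasDerivAt (fun y : ℝ => 8*Real.sin y) (8*Real.cos x) x := by
    simpa using (Real.hasDerivAt_sin x).const_mul (8:ℝ)
  have hb : HasDerivAt (fun y : ℝ => 1 - Real.cos y) (Real.sin x) x := by
    simpa using HasDerivAt.const_sub (1:ℝ) (Real.hasDerivAt_cos x)
  have h2 := ((ha.mul hb).sub_const s).const_mul (-t)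
  exact h2.congr_deriv (by linear_combination (-(8*t)) * Real.sin_sq_add_cos_sq x)

lemma hder3 (t : ℝ) (x : ℝ) :
    HasDerivAt (fun x => -t * (8 + 8*Real.cos x - 16*Real.cos x ^ 2))
      (-t * (8*Real.sin x*(4*Real.cos x - 1))) x := by
  have ha : HasDerivAt (fun y : ℝ => 8*Real.cos y) (8*(-Real.sin x)) x :=
    (Real.hasDerivAt_cos x).const_mul (8:ℝ)
  have hb : HasDerivAt (fun y : ℝ => 16*Real.cos y ^ 2)
      (16*(2*Real.cos x ^ 1*(-Real.sin x))) x := by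
    exact ((Real.hasDerivAt_cos x).pow 2).const_mul (16:ℝ)
  have h2 := ((ha.const_add (8:ℝ)).sub hb).const_mul (-t)
  exact h2.congr_deriv (by ring)

lemma hder4 (t : ℝ) (x : ℝ) :
    HasDerivAt (fun x => -t * (8*Real.sin x*(4*Real.cos x - 1)))
      (-t * (64*Real.cos x ^ 2 - 8*Real.cos x - 32)) x := by
  have ha : HasDerivAt (fun y : ℝ => 8*Real.sin y) (8*Real.cos x) x := by
    simpa using (Real.hasDerivAt_sin x).const_mul (8:ℝ)
  have hb : HasDerivAt (fun y : ℝ => 4*Real.cos y - 1) (4*(-Real.sin x)) x :=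
    ((Real.hasDerivAt_cos x).const_mul (4:ℝ)).sub_const 1
  have h2 := (ha.mul hb).const_mul (-t)
  exact h2.congr_deriv (by linear_combination (32*t) * Real.sin_sq_add_cos_sq x)

end VdCAux

set_option maxHeartbeats 1000000 in
open VdCAux Set in
/-- the uniform Van der Corput estimate
`sup_{s∈ℝ} |∫_{-π}^0 e^{-it[(2-2cos x)² - s x]} dx| ≲ |t|^{-1/4}`. -/
theorem van_der_corput_quarter_decay :
    ∃ C : ℝ, 0 < C ∧ ∀ t : ℝ, t ≠ 0 → ∀ s : ℝ,
      ‖∫ x in (-π : ℝ)..0,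
          Complex.exp (-Complex.I * t * (((2 - 2 * Real.cos x) ^ 2 - s * x : ℝ) : ℂ))‖
        ≤ C * |t| ^ (-(1/4 : ℝ)) := by
  refine ⟨72, by norm_num, ?_⟩
  intro t ht s
  have hπ := Real.pi_pos
  have habs : 0 < |t| := abs_pos.2 ht
  have hrw : (∫ x in (-π : ℝ)..0,
        Complex.exp (-Complex.I * t * (((2 - 2 * Real.cos x) ^ 2 - s * x : ℝ) : ℂ)))
      = ∫ x in (-π : ℝ)..0, Complex.exp (Complex.I *
          ((-t * ((2 - 2*Real.cos x) ^ 2 - s*x) : ℝ) : ℂ)) := by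
    apply intervalIntegral.integral_congr
    intro x _
    show Complex.exp _ = Complex.exp _
    congr 1
    push_cast
    ring
  rw [hrw]
  rcases le_or_gt |t| 1 with hle | hgt
  · -- small |t|
    have h1 := osc_trivial (fun y => -t * ((2 - 2*Real.cos y) ^ 2 - s*y)) (-π) 0
      (by linarith)
    have h2 : (1:ℝ) ≤ |t| ^ (-(1/4 : ℝ)) :=
      Real.one_le_rpow_of_pos_of_le_one_of_nonpos habs hle (by norm_num)
    have h3 := Real.pi_le_four
    calc ‖∫ x in (-π : ℝ)..0, Complex.exp (Complex.I *
          ((-t * ((2 - 2*Real.cos x) ^ 2 - s*x) : ℝ) : ℂ))‖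
        ≤ 0 - (-π) := h1
    _ ≤ 4 := by linarith
    _ ≤ 72 * |t| ^ (-(1/4 : ℝ)) := by nlinarith
  · -- large |t|
    have h1t : (1:ℝ) ≤ |t| := hgt.le
    have hfac : ∀ q : ℝ, 1 ≤ |q| → |t| ≤ |-t * q| := by
      intro q hq
      rw [abs_mul, abs_neg]
      nlinarith [abs_nonneg t]
    have hcD2 : Continuous fun x => -t * (8 + 8*Real.cos x - 16*Real.cos x ^ 2) :=
      cont_of_deriv (fun x => hder3 t x)
    have hcD3 : Continuous fun x => -t * (8*Real.sin x*(4*Real.cos x - 1)) :=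
      cont_of_deriv (fun x => hder4 t x)
    have hcD4 : Continuous fun x => -t * (64*Real.cos x ^ 2 - 8*Real.cos x - 32) := by
      fun_prop
    have hexp : ∀ p : ℝ, p ≤ -(1/4 : ℝ) → |t| ^ p ≤ |t| ^ (-(1/4 : ℝ)) :=
      fun p hp => Real.rpow_le_rpow_of_exponent_le h1t hp
    -- the four pieces
    have hB1 : ‖∫ x in (-π : ℝ)..(-(3*π/4)), Complex.exp (Complex.I *
          ((-t * ((2 - 2*Real.cos x) ^ 2 - s*x) : ℝ) : ℂ))‖
        ≤ 8 * |t| ^ (-(1/2 : ℝ)) := by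
      apply vdc2 _ (fun x => -t * (8*Real.sin x*(1 - Real.cos x) - s))
        (fun x => -t * (8 + 8*Real.cos x - 16*Real.cos x ^ 2)) _ _ _ (by linarith) habs
        (fun x => hder1 t s x) (fun x => hder2 t s x) hcD2
      intro x hx
      exact hfac _ (le_abs.2 (Or.inr (by linarith [bnd1 hx.1 hx.2])))
    have hB2 : ‖∫ x in (-(3*π/4) : ℝ)..(-(π/2)), Complex.exp (Complex.I *
          ((-t * ((2 - 2*Real.cos x) ^ 2 - s*x) : ℝ) : ℂ))‖
        ≤ 18 * |t| ^ (-(1/3 : ℝ)) := by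
      apply vdc3 _ (fun x => -t * (8*Real.sin x*(1 - Real.cos x) - s))
        (fun x => -t * (8 + 8*Real.cos x - 16*Real.cos x ^ 2))
        (fun x => -t * (8*Real.sin x*(4*Real.cos x - 1))) _ _ _ (by linarith) habs
        (fun x => hder1 t s x) (fun x => hder2 t s x) (fun x => hder3 t x) hcD2 hcD3
      intro x hx
      exact hfac _ (le_abs.2 (Or.inl (bnd2 hx.1 hx.2)))
    have hB3 : ‖∫ x in (-(π/2) : ℝ)..(-(π/6)), Complex.exp (Complex.I *
          ((-t * ((2 - 2*Real.cos x) ^ 2 - s*x) : ℝ) : ℂ))‖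
        ≤ 8 * |t| ^ (-(1/2 : ℝ)) := by
      apply vdc2 _ (fun x => -t * (8*Real.sin x*(1 - Real.cos x) - s))
        (fun x => -t * (8 + 8*Real.cos x - 16*Real.cos x ^ 2)) _ _ _ (by linarith) habs
        (fun x => hder1 t s x) (fun x => hder2 t s x) hcD2
      intro x hx
      exact hfac _ (le_abs.2 (Or.inl (bnd3 hx.1 hx.2)))
    have hB4 : ‖∫ x in (-(π/6) : ℝ)..0, Complex.exp (Complex.I *
          ((-t * ((2 - 2*Real.cos x) ^ 2 - s*x) : ℝ) : ℂ))‖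
        ≤ 38 * |t| ^ (-(1/4 : ℝ)) := by
      apply vdc4 _ (fun x => -t * (8*Real.sin x*(1 - Real.cos x) - s))
        (fun x => -t * (8 + 8*Real.cos x - 16*Real.cos x ^ 2))
        (fun x => -t * (8*Real.sin x*(4*Real.cos x - 1)))
        (fun x => -t * (64*Real.cos x ^ 2 - 8*Real.cos x - 32)) _ _ _ (by linarith) habs
        (fun x => hder1 t s x) (fun x => hder2 t s x) (fun x => hder3 t x)
        (fun x => hder4 t x) hcD2 hcD3 hcD4
      intro x hx
      exact hfac _ (le_abs.2 (Or.inl (bnd4 hx.1 hx.2)))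
    have hIc : ∀ c e : ℝ, IntervalIntegrable (fun x => Complex.exp (Complex.I *
          ((-t * ((2 - 2*Real.cos x) ^ 2 - s*x) : ℝ) : ℂ))) MeasureTheory.volume c e :=
      fun c e => (osc_cont _ (cont_of_deriv (fun x => hder1 t s x))).intervalIntegrable c e
    have heq : (∫ x in (-π : ℝ)..0, Complex.exp (Complex.I *
          ((-t * ((2 - 2*Real.cos x) ^ 2 - s*x) : ℝ) : ℂ)))
        = (((∫ x in (-π : ℝ)..(-(3*π/4)), Complex.exp (Complex.I *
          ((-t * ((2 - 2*Real.cos x) ^ 2 - s*x) : ℝ) : ℂ)))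
          + ∫ x in (-(3*π/4) : ℝ)..(-(π/2)), Complex.exp (Complex.I *
          ((-t * ((2 - 2*Real.cos x) ^ 2 - s*x) : ℝ) : ℂ)))
          + ∫ x in (-(π/2) : ℝ)..(-(π/6)), Complex.exp (Complex.I *
          ((-t * ((2 - 2*Real.cos x) ^ 2 - s*x) : ℝ) : ℂ)))
          + ∫ x in (-(π/6) : ℝ)..0, Complex.exp (Complex.I *
          ((-t * ((2 - 2*Real.cos x) ^ 2 - s*x) : ℝ) : ℂ)) := by
      rw [intervalIntegral.integral_add_adjacent_intervals (hIc (-π) (-(3*π/4)))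
          (hIc (-(3*π/4)) (-(π/2))),
        intervalIntegral.integral_add_adjacent_intervals (hIc (-π) (-(π/2)))
          (hIc (-(π/2)) (-(π/6))),
        intervalIntegral.integral_add_adjacent_intervals (hIc (-π) (-(π/6)))
          (hIc (-(π/6)) 0)]
    have hb1' := hB1.trans (mul_le_mul_of_nonneg_left (hexp _ (by norm_num)) (by norm_num))
    have hb2' := hB2.trans (mul_le_mul_of_nonneg_left (hexp _ (by norm_num)) (by norm_num))
    have hb3' := hB3.trans (mul_le_mul_of_nonneg_left (hexp _ (by norm_num)) (by norm_num))
    rw [heq]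
    have htri := norm_add_le (((∫ x in (-π : ℝ)..(-(3*π/4)), Complex.exp (Complex.I *
          ((-t * ((2 - 2*Real.cos x) ^ 2 - s*x) : ℝ) : ℂ)))
          + ∫ x in (-(3*π/4) : ℝ)..(-(π/2)), Complex.exp (Complex.I *
          ((-t * ((2 - 2*Real.cos x) ^ 2 - s*x) : ℝ) : ℂ)))
          + ∫ x in (-(π/2) : ℝ)..(-(π/6)), Complex.exp (Complex.I *
          ((-t * ((2 - 2*Real.cos x) ^ 2 - s*x) : ℝ) : ℂ)))
      (∫ x in (-(π/6) : ℝ)..0, Complex.exp (Complex.I *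
          ((-t * ((2 - 2*Real.cos x) ^ 2 - s*x) : ℝ) : ℂ)))
    have htri2 := norm_add_le ((∫ x in (-π : ℝ)..(-(3*π/4)), Complex.exp (Complex.I *
          ((-t * ((2 - 2*Real.cos x) ^ 2 - s*x) : ℝ) : ℂ)))
          + ∫ x in (-(3*π/4) : ℝ)..(-(π/2)), Complex.exp (Complex.I *
          ((-t * ((2 - 2*Real.cos x) ^ 2 - s*x) : ℝ) : ℂ)))
      (∫ x in (-(π/2) : ℝ)..(-(π/6)), Complex.exp (Complex.I *
          ((-t * ((2 - 2*Real.cos x) ^ 2 - s*x) : ℝ) : ℂ)))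
    have htri3 := norm_add_le (∫ x in (-π : ℝ)..(-(3*π/4)), Complex.exp (Complex.I *
          ((-t * ((2 - 2*Real.cos x) ^ 2 - s*x) : ℝ) : ℂ)))
      (∫ x in (-(3*π/4) : ℝ)..(-(π/2)), Complex.exp (Complex.I *
          ((-t * ((2 - 2*Real.cos x) ^ 2 - s*x) : ℝ) : ℂ)))
    linarith
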